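/- Let G = (V, A) be a finite directed graph, s ∈ V, and C ⊆ V with s ∉ C. Let F ⊆ A be a set of arcs such that: every vertex v ∉ C ∪ {s} is the head of exactly one arc of F; no vertex of C ∪ {s} is the head of any arc of F; and F contains no (undirected) cycle, so that F is a forest. Let H_1, …, H_r be the weakly connected components of the subgraph (V, F), with s ∈ H_1, and let G(F,s) be the directed graph on vertex set {h_1, …, h_r} having an arc (h_j, h_l) for each arc (v, u) ∈ A with v ∈ H_j, u ∈ H_l, and u ∈ C \ {s}. Then the map H′ ↦ H′ ∪ F (identifying each arc of G(F,s) with the arc of A it came from) is a bijection between the set of spanning arborescences of G(F,s) rooted at h_1 and the set of spanning arborescences H of G rooted at s such that for every v ∉ C ∪ {s}, the unique arc of H entering v equals the unique arc of F entering v. -/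

import Mathlib

/-- A spanning arborescence of the directed graph `(V, A)` rooted at `root`: a set `T ⊆ A`
of arcs such that every vertex other than `root` is the head of exactly one arc of `T`,
`root` is the head of no arc of `T`, and every vertex is reachable from `root` by a
directed path using arcs of `T`.  (An arc `(v, u)` has tail `v` and head `u`.) -/
def IsArborescence {V : Type*} (A : Set (V × V)) (root : V) (T : Set (V × V)) : Prop :=
  T ⊆ A ∧
  (∀ v : V, v ≠ root → ∃! a : V × V, a ∈ T ∧ a.2 = v) ∧
  (∀ a ∈ T, a.2 ≠ root) ∧
  (∀ v : V, Relation.ReflTransGen (fun x y => (x, y) ∈ T) root v)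

/-- The undirected graph underlying a set `F` of arcs: `x` and `y` are adjacent iff they
are distinct and `F` contains the arc `(x, y)` or the arc `(y, x)`. -/
def undirected {V : Type*} (F : Set (V × V)) : SimpleGraph V :=
  SimpleGraph.fromRel fun x y => (x, y) ∈ F

/-- The weakly connected component of `v` in the arc set `F`. -/
def weakComp {V : Type*} (F : Set (V × V)) (v : V) : (undirected F).ConnectedComponent :=
  (undirected F).connectedComponentMk v

/-- A spanning arborescence, rooted at the weak component of `s`, of the contracted
multigraph `G(F, s)` whose vertices are the weakly connected components of `(V, F)` and
which has one arc for each arc `a ∈ A` whose head lies in `C \ {s}` (the arc going from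
the component of the tail of `a` to the component of the head of `a`).  A spanning
arborescence is represented by the set `T` of arcs of `A` giving rise to its arcs: every
component other than that of `s` must be the head-component of exactly one arc of `T`, the
component of `s` is the head-component of no arc of `T`, and every component is reachable
from the component of `s` through arcs of `T`. -/
def IsContractedArborescence {V : Type*} (A : Set (V × V)) (s : V) (C : Set V)
    (F : Set (V × V)) (T : Set (V × V)) : Prop :=
  T ⊆ {a ∈ A | a.2 ∈ C \ {s}} ∧
  (∀ q : (undirected F).ConnectedComponent, q ≠ weakComp F s →
    ∃! a : V × V, a ∈ T ∧ weakComp F a.2 = q) ∧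
  (∀ a ∈ T, weakComp F a.2 ≠ weakComp F s) ∧
  (∀ q : (undirected F).ConnectedComponent,
    Relation.ReflTransGen
      (fun x y => ∃ a ∈ T, weakComp F a.1 = x ∧ weakComp F a.2 = y) (weakComp F s) q)

/-!
Every vertex outside `R = C ∪ {s}` has exactly one parent in `F` and the vertices of `R` have
none. As `F` has no undirected cycle, following parents backwards terminates, so every vertex is
`F`-reachable from a vertex of `R`; and a path inside a weak component that starts at a vertex of
`R` runs forward along `F`, so each weak component contains exactly one vertex of `R`. Therefore
an arc entering a component of `G(F, s)` is the same as an arc of `A` entering a vertex of `C`,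
and `H ↦ {a ∈ H | a.2 ∈ C}` inverts `T ↦ T ∪ F`.
-/

section Forest

variable {V : Type*} {F : Set (V × V)}

lemma undirected_adj_iff {x y : V} :
    (undirected F).Adj x y ↔ x ≠ y ∧ ((x, y) ∈ F ∨ (y, x) ∈ F) :=
  SimpleGraph.fromRel_adj _ _ _

lemma undirected_adj {x y : V} (hxy : x ≠ y) (h : (x, y) ∈ F) : (undirected F).Adj x y :=
  undirected_adj_iff.mpr ⟨hxy, .inl h⟩

lemma weakComp_eq_of_mem {x y : V} (h : (x, y) ∈ F) : weakComp F x = weakComp F y := by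
  by_cases hxy : x = y
  · rw [hxy]
  · exact SimpleGraph.ConnectedComponent.sound (undirected_adj hxy h).reachable

lemma weakComp_eq_of_reflTransGen {x y : V}
    (h : Relation.ReflTransGen (fun a b => (a, b) ∈ F) x y) : weakComp F x = weakComp F y := by
  induction h with
  | refl => rfl
  | tail _ hyz ih => exact ih.trans (weakComp_eq_of_mem hyz)

/-- Stopping at the first visit of `v` keeps the arc `(v, y)` out of the walk. -/
lemma exists_walk_not_mem_edges_of_reflTransGen (hnopair : ∀ a ∈ F, (a.2, a.1) ∉ F)
    {v y w : V} (hvy : (v, y) ∈ F) (h : Relation.ReflTransGen (fun a b => (a, b) ∈ F) w v) :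
    ∃ p : (undirected F).Walk w v, s(v, y) ∉ p.edges := by
  induction h using Relation.ReflTransGen.head_induction_on with
  | refl => exact ⟨.nil, by simp⟩
  | @head w x hwx _ ih =>
    obtain ⟨p, hp⟩ := ih
    by_cases hwv : w = v
    · subst hwv
      exact ⟨.nil, by simp⟩
    by_cases hwx' : w = x
    · subst hwx'
      exact ⟨p, hp⟩
    refine ⟨.cons (undirected_adj hwx' hwx) p, ?_⟩
    rw [SimpleGraph.Walk.edges_cons, List.mem_cons, not_or, Sym2.eq_iff]
    refine ⟨?_, hp⟩
    rintro (⟨rfl, -⟩ | ⟨rfl, rfl⟩)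
    · exact hwv rfl
    · exact hnopair _ hvy hwx

lemma not_transGen_self (hloop : ∀ a ∈ F, a.1 ≠ a.2) (hnopair : ∀ a ∈ F, (a.2, a.1) ∉ F)
    (hforest : (undirected F).IsAcyclic) (v : V) :
    ¬ Relation.TransGen (fun a b => (a, b) ∈ F) v v := by
  intro h
  obtain ⟨y, hvy, hyv⟩ := Relation.TransGen.head'_iff.mp h
  obtain ⟨p, hp⟩ := exists_walk_not_mem_edges_of_reflTransGen hnopair hvy hyv
  have hbridge := SimpleGraph.isAcyclic_iff_forall_adj_isBridge.mp hforest
    (undirected_adj (hloop _ hvy) hvy)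
  refine SimpleGraph.isBridge_iff.mp hbridge ?_
  exact SimpleGraph.reachable_deleteEdges_iff_exists_walk.mpr ⟨p.reverse, by simpa using hp⟩

lemma wellFounded_of_isAcyclic [Finite V] (hloop : ∀ a ∈ F, a.1 ≠ a.2)
    (hnopair : ∀ a ∈ F, (a.2, a.1) ∉ F) (hforest : (undirected F).IsAcyclic) :
    WellFounded (fun a b : V => (a, b) ∈ F) :=
  have : Std.Irrefl (Relation.TransGen fun a b : V => (a, b) ∈ F) :=
    ⟨not_transGen_self hloop hnopair hforest⟩
  Subrelation.wf (fun h => Relation.TransGen.single h)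
    (Finite.wellFounded_of_trans_of_irrefl (Relation.TransGen fun a b : V => (a, b) ∈ F))

lemma exists_root_reflTransGen [Finite V] {R : Set V} (hhead : ∀ v ∉ R, ∃ a ∈ F, a.2 = v)
    (hloop : ∀ a ∈ F, a.1 ≠ a.2) (hnopair : ∀ a ∈ F, (a.2, a.1) ∉ F)
    (hforest : (undirected F).IsAcyclic) (v : V) :
    ∃ r ∈ R, Relation.ReflTransGen (fun a b => (a, b) ∈ F) r v := by
  induction v using (wellFounded_of_isAcyclic hloop hnopair hforest).induction with
  | _ v ih =>
    by_cases hv : v ∈ R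
    · exact ⟨v, hv, .refl⟩
    obtain ⟨⟨u, _⟩, hu, rfl⟩ := hhead v hv
    obtain ⟨r, hr, hru⟩ := ih u hu
    exact ⟨r, hr, hru.tail hu⟩

/-- The invariant is that the start has no parent on the path: after a forward step `(x, z)` the
only parent of `z` is `x`, which the rest of the path avoids. -/
lemma reflTransGen_of_isPath (hpar : Set.InjOn Prod.snd F) {x w : V}
    (p : (undirected F).Walk x w) (hp : p.IsPath) (hx : ∀ y, (y, x) ∈ F → y ∉ p.support) :
    Relation.ReflTransGen (fun a b => (a, b) ∈ F) x w := by
  induction p with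
  | nil => exact .refl
  | @cons x z w hadj q ih =>
    rw [SimpleGraph.Walk.cons_isPath_iff] at hp
    rcases (undirected_adj_iff.mp hadj).2 with hxz | hzx
    · refine .head hxz (ih hp.1 fun y hyz hy => hp.2 ?_)
      obtain rfl : y = x := congrArg Prod.fst (hpar hyz hxz rfl)
      exact hy
    · exact absurd (by simp) (hx z hzx)

lemma eq_of_weakComp_eq {R : Set V} (hpar : Set.InjOn Prod.snd F) (hR : ∀ a ∈ F, a.2 ∉ R)
    {u w : V} (hu : u ∈ R) (hw : w ∈ R) (h : weakComp F u = weakComp F w) : u = w := by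
  classical
  obtain ⟨p⟩ := SimpleGraph.ConnectedComponent.exact h
  rcases (reflTransGen_of_isPath hpar _ p.toPath.2 fun y hy _ => hR _ hy hu).cases_tail with
    hwu | ⟨c, -, hcw⟩
  · exact hwu.symm
  · exact absurd hw (hR _ hcw)

end Forest

section Contraction

variable {V : Type*} {A F T H : Set (V × V)} {s : V} {C : Set V}

lemma IsContractedArborescence.sep_union_eq_self (hFC : ∀ a ∈ F, a.2 ∉ C ∪ {s})
    (hT : IsContractedArborescence A s C F T) : {a ∈ T ∪ F | a.2 ∈ C} = T := by
  ext a
  constructor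
  · rintro ⟨haT | haF, haC⟩
    · exact haT
    · exact absurd (.inl haC) (hFC a haF)
  · exact fun haT => ⟨.inl haT, (hT.1 haT).2.1⟩

lemma IsContractedArborescence.existsUnique_head_union
    (hFhead : ∀ v : V, v ∉ C ∪ {s} → ∃! a : V × V, a ∈ F ∧ a.2 = v)
    (hFC : ∀ a ∈ F, a.2 ∉ C ∪ {s})
    (huniq : ∀ u ∈ C ∪ {s}, ∀ w ∈ C ∪ {s}, weakComp F u = weakComp F w → u = w)
    (hT : IsContractedArborescence A s C F T) {v : V} (hv : v ≠ s) :
    ∃! a : V × V, a ∈ T ∪ F ∧ a.2 = v := by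
  by_cases hvC : v ∈ C
  · have hq : weakComp F v ≠ weakComp F s := fun h => hv (huniq v (.inl hvC) s (.inr rfl) h)
    obtain ⟨a, ⟨haT, hav⟩, ha⟩ := hT.2.1 _ hq
    refine ⟨a, ⟨.inl haT, huniq _ (.inl (hT.1 haT).2.1) _ (.inl hvC) hav⟩, ?_⟩
    rintro b ⟨hbT | hbF, rfl⟩
    · exact ha b ⟨hbT, rfl⟩
    · exact absurd (.inl hvC) (hFC b hbF)
  · obtain ⟨a, ⟨haF, hav⟩, ha⟩ := hFhead v (by simp [hvC, hv])
    refine ⟨a, ⟨.inr haF, hav⟩, ?_⟩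
    rintro b ⟨hbT | hbF, rfl⟩
    · exact absurd (hT.1 hbT).2.1 hvC
    · exact ha b ⟨hbF, rfl⟩

lemma IsContractedArborescence.reflTransGen_union
    (hroot : ∀ v : V, ∃ r ∈ C ∪ {s}, Relation.ReflTransGen (fun a b => (a, b) ∈ F) r v)
    (huniq : ∀ u ∈ C ∪ {s}, ∀ w ∈ C ∪ {s}, weakComp F u = weakComp F w → u = w)
    (hT : IsContractedArborescence A s C F T) (v : V) :
    Relation.ReflTransGen (fun a b => (a, b) ∈ T ∪ F) s v := by
  have from_root : ∀ r ∈ C ∪ {s}, ∀ u, weakComp F r = weakComp F u →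
      Relation.ReflTransGen (fun a b => (a, b) ∈ T ∪ F) r u := by
    intro r hr u hru
    obtain ⟨r', hr', hr'u⟩ := hroot u
    obtain rfl := huniq r hr r' hr' (hru.trans (weakComp_eq_of_reflTransGen hr'u).symm)
    exact Relation.ReflTransGen.mono (fun _ _ => Or.inr) _ _ hr'u
  suffices h : ∀ q, Relation.ReflTransGen
      (fun x y => ∃ a ∈ T, weakComp F a.1 = x ∧ weakComp F a.2 = y) (weakComp F s) q →
      ∀ u, weakComp F u = q → Relation.ReflTransGen (fun a b => (a, b) ∈ T ∪ F) s u from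
    h _ (hT.2.2.2 _) v rfl
  intro q hq
  induction hq with
  | refl => exact fun u hu => from_root s (.inr rfl) u hu.symm
  | tail _ hstep ih =>
    obtain ⟨a, haT, ha1, rfl⟩ := hstep
    exact fun u hu => ((ih a.1 ha1).tail (.inl haT)).trans
      (from_root a.2 (.inl (hT.1 haT).2.1) u hu.symm)

lemma IsContractedArborescence.isArborescence_union (hFA : F ⊆ A)
    (hFhead : ∀ v : V, v ∉ C ∪ {s} → ∃! a : V × V, a ∈ F ∧ a.2 = v)
    (hFC : ∀ a ∈ F, a.2 ∉ C ∪ {s})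
    (hroot : ∀ v : V, ∃ r ∈ C ∪ {s}, Relation.ReflTransGen (fun a b => (a, b) ∈ F) r v)
    (huniq : ∀ u ∈ C ∪ {s}, ∀ w ∈ C ∪ {s}, weakComp F u = weakComp F w → u = w)
    (hT : IsContractedArborescence A s C F T) : IsArborescence A s (T ∪ F) := by
  refine ⟨Set.union_subset (fun a ha => (hT.1 ha).1) hFA,
    fun v hv => hT.existsUnique_head_union hFhead hFC huniq hv, ?_,
    hT.reflTransGen_union hroot huniq⟩
  rintro a (haT | haF)
  · exact (hT.1 haT).2.2
  · exact fun h => hFC a haF (.inr h)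

lemma IsArborescence.sep_union_forest_eq_self (hpar : Set.InjOn Prod.snd F)
    (hFC : ∀ a ∈ F, a.2 ∉ C ∪ {s})
    (hH : IsArborescence A s H) (hHF : ∀ v : V, v ∉ C ∪ {s} → ∀ a ∈ H, a.2 = v → a ∈ F) :
    {a ∈ H | a.2 ∈ C} ∪ F = H := by
  refine subset_antisymm (Set.union_subset (Set.sep_subset _ _) fun a haF => ?_) fun a haH => ?_
  · obtain ⟨b, ⟨hbH, hba⟩, -⟩ := hH.2.1 a.2 fun h => hFC a haF (.inr h)
    obtain rfl : b = a := hpar (hHF _ (hFC a haF) b hbH hba) haF hba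
    exact hbH
  · by_cases haC : a.2 ∈ C
    · exact .inl ⟨haH, haC⟩
    · exact .inr (hHF a.2 (by simp [haC, hH.2.2.1 a haH]) a haH rfl)

lemma IsArborescence.existsUnique_weakComp_head
    (hroot : ∀ v : V, ∃ r ∈ C ∪ {s}, Relation.ReflTransGen (fun a b => (a, b) ∈ F) r v)
    (huniq : ∀ u ∈ C ∪ {s}, ∀ w ∈ C ∪ {s}, weakComp F u = weakComp F w → u = w)
    (hH : IsArborescence A s H) {q : (undirected F).ConnectedComponent}
    (hq : q ≠ weakComp F s) : ∃! a : V × V, a ∈ {a ∈ H | a.2 ∈ C} ∧ weakComp F a.2 = q := by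
  induction q using SimpleGraph.ConnectedComponent.ind with | h v =>
  obtain ⟨r, hr, hrv⟩ := hroot v
  have hrq : weakComp F r = weakComp F v := weakComp_eq_of_reflTransGen hrv
  have hrs : r ≠ s := by
    rintro rfl
    exact hq hrq.symm
  obtain ⟨a, ⟨haH, rfl⟩, ha⟩ := hH.2.1 r hrs
  refine ⟨a, ⟨⟨haH, hr.resolve_right hrs⟩, hrq⟩, ?_⟩
  rintro b ⟨⟨hbH, hbC⟩, hbq⟩
  exact ha b ⟨hbH, huniq _ (.inl hbC) _ hr (hbq.trans hrq.symm)⟩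

lemma IsArborescence.reflTransGen_weakComp (hH : IsArborescence A s H)
    (hHF : ∀ v : V, v ∉ C ∪ {s} → ∀ a ∈ H, a.2 = v → a ∈ F)
    (q : (undirected F).ConnectedComponent) :
    Relation.ReflTransGen (fun x y => ∃ a ∈ {a ∈ H | a.2 ∈ C},
      weakComp F a.1 = x ∧ weakComp F a.2 = y) (weakComp F s) q := by
  induction q using SimpleGraph.ConnectedComponent.ind with | h v =>
  change Relation.ReflTransGen _ _ (weakComp F v)
  induction hH.2.2.2 v with
  | refl => exact .refl
  | @tail b c _ hbc ih =>
    by_cases hc : c ∈ C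
    · exact ih.tail ⟨(b, c), ⟨hbc, hc⟩, rfl, rfl⟩
    · rwa [← weakComp_eq_of_mem (hHF c (by simp [hc, hH.2.2.1 _ hbc]) _ hbc rfl)]

lemma IsArborescence.isContractedArborescence_sep
    (hroot : ∀ v : V, ∃ r ∈ C ∪ {s}, Relation.ReflTransGen (fun a b => (a, b) ∈ F) r v)
    (huniq : ∀ u ∈ C ∪ {s}, ∀ w ∈ C ∪ {s}, weakComp F u = weakComp F w → u = w)
    (hH : IsArborescence A s H) (hHF : ∀ v : V, v ∉ C ∪ {s} → ∀ a ∈ H, a.2 = v → a ∈ F) :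
    IsContractedArborescence A s C F {a ∈ H | a.2 ∈ C} := by
  refine ⟨fun a ⟨haH, haC⟩ => ⟨hH.1 haH, haC, hH.2.2.1 a haH⟩,
    fun q hq => hH.existsUnique_weakComp_head hroot huniq hq, fun a ⟨haH, haC⟩ h => ?_,
    hH.reflTransGen_weakComp hHF⟩
  exact hH.2.2.1 a haH (huniq _ (.inl haC) _ (.inr rfl) h)

end Contraction

theorem contracted_arborescence_bijection_general
    {V : Type*} [Fintype V]
    (A : Set (V × V)) (s : V) (C : Set V)
    (F : Set (V × V)) (hFA : F ⊆ A)
    (hFhead : ∀ v : V, v ∉ C ∪ {s} → ∃! a : V × V, a ∈ F ∧ a.2 = v)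
    (hFC : ∀ a ∈ F, a.2 ∉ C ∪ {s})
    -- `F` contains no undirected cycle (no loops, no antiparallel pair of arcs, and the
    -- underlying undirected simple graph is acyclic), i.e. `F` is a forest:
    (hFloopless : ∀ a ∈ F, a.1 ≠ a.2)
    (hFnopair : ∀ a ∈ F, (a.2, a.1) ∉ F)
    (hforest : (undirected F).IsAcyclic) :
    Set.BijOn (fun T => T ∪ F)
      {T : Set (V × V) | IsContractedArborescence A s C F T}
      {H : Set (V × V) | IsArborescence A s H ∧
        ∀ v : V, v ∉ C ∪ {s} → ∀ a ∈ H, a.2 = v → a ∈ F} := by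
  have hpar : Set.InjOn Prod.snd F := fun a ha b hb hab =>
    (hFhead a.2 (hFC a ha)).unique ⟨ha, rfl⟩ ⟨hb, hab.symm⟩
  have hroot : ∀ v : V, ∃ r ∈ C ∪ {s}, Relation.ReflTransGen (fun a b => (a, b) ∈ F) r v :=
    exists_root_reflTransGen (fun v hv => (hFhead v hv).exists) hFloopless hFnopair hforest
  have huniq : ∀ u ∈ C ∪ {s}, ∀ w ∈ C ∪ {s}, weakComp F u = weakComp F w → u = w :=
    fun u hu w hw => eq_of_weakComp_eq hpar hFC hu hw
  refine ⟨fun T hT => ⟨hT.isArborescence_union hFA hFhead hFC hroot huniq, ?_⟩, ?_, ?_⟩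
  · rintro v hv a (haT | haF) rfl
    · exact absurd (.inl (hT.1 haT).2.1) hv
    · exact haF
  · intro T₁ hT₁ T₂ hT₂ h
    rw [← hT₁.sep_union_eq_self hFC, ← hT₂.sep_union_eq_self hFC, show T₁ ∪ F = T₂ ∪ F from h]
  · rintro H ⟨hH, hHF⟩
    exact ⟨_, hH.isContractedArborescence_sep hroot huniq hHF,
      hH.sep_union_forest_eq_self hpar hFC hHF⟩

/-- **Reconstruction of missing arcs by contraction.** Let `(V, A)` be a finite directed
graph, `s ∈ V`, `C ⊆ V` with `s ∉ C`, and let `F ⊆ A` be a forest of arcs such that every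
vertex outside `C ∪ {s}` is the head of exactly one arc of `F` and no vertex of `C ∪ {s}`
is the head of an arc of `F`.  Then `H' ↦ H' ∪ F` is a bijection between the spanning
arborescences of the contracted graph `G(F, s)` rooted at the component of `s` and the
spanning arborescences `H` of `(V, A)` rooted at `s` whose arc entering any vertex
`v ∉ C ∪ {s}` is the arc of `F` entering `v`. -/
theorem contracted_arborescence_bijection
    {V : Type*} [Fintype V] [DecidableEq V]
    (A : Set (V × V)) (s : V) (C : Set V) (hs : s ∉ C)
    (F : Set (V × V)) (hFA : F ⊆ A)
    (hFhead : ∀ v : V, v ∉ C ∪ {s} → ∃! a : V × V, a ∈ F ∧ a.2 = v)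
    (hFC : ∀ a ∈ F, a.2 ∉ C ∪ {s})
    -- `F` contains no undirected cycle (no loops, no antiparallel pair of arcs, and the
    -- underlying undirected simple graph is acyclic), i.e. `F` is a forest:
    (hFloopless : ∀ a ∈ F, a.1 ≠ a.2)
    (hFnopair : ∀ a ∈ F, (a.2, a.1) ∉ F)
    (hforest : (undirected F).IsAcyclic) :
    Set.BijOn (fun T => T ∪ F)
      {T : Set (V × V) | IsContractedArborescence A s C F T}
      {H : Set (V × V) | IsArborescence A s H ∧
        ∀ v : V, v ∉ C ∪ {s} → ∀ a ∈ H, a.2 = v → a ∈ F} :=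
  contracted_arborescence_bijection_general A s C F hFA hFhead hFC hFloopless hFnopair hforest
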